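/- arXiv:1509.03812 — 2 statements merged into one kernel-verified Lean document; each statement's English description precedes it below -/
import Mathlib

section
/- The state-independent disturbance satisfies η(𝒜',ℬ) ≤ 1 − 1/d. -/
/-!
Write `c_j = ⟪a'_j, b_i⟫` and `ρ_jk = ⟪a'_j, ρ a'_k⟫`. Expanding `b_i` in the basis `a'` shows that
the trace of `ρ ∘ distOp a' b i` is the off-diagonal part `∑_{j ≠ k} c̄_j c_k ρ_jk` of `⟪b_i, ρ b_i⟫`.
Positivity of `ρ` gives `|ρ_jk| ≤ √ρ_jj √ρ_kk`, so with `w_j = |c_j| √ρ_jj` and `W = ∑ w_j` the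
trace is bounded by `∑_{j ≠ k} w_j w_k = W² - ∑ w_j² ≤ (1 - 1/d) W²`, using `W² ≤ d ∑ w_j²`.
Finally `W ≤ 1` by Cauchy–Schwarz, because `∑ |c_j|² = ‖b_i‖² = 1` and `∑ ρ_jj = tr ρ = 1`.
-/

open scoped ComplexInnerProductSpace

noncomputable section

variable {H : Type*} [NormedAddCommGroup H] [InnerProductSpace ℂ H] [FiniteDimensional ℂ H]
variable {ι ι' : Type*} [Fintype ι] [Fintype ι']

/-- The rank-one projector `|v⟩⟨v|`. -/
def ketbra (v : H) : H →ₗ[ℂ] H where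
  toFun x := ⟪v, x⟫ • v
  map_add' x y := by simp [inner_add_right, add_smul]
  map_smul' c x := by simp [inner_smul_right, mul_smul]

/-- A density operator: self-adjoint, positive semidefinite, trace one. -/
def IsDensity (ρ : H →ₗ[ℂ] H) : Prop :=
  LinearMap.IsSymmetric ρ ∧ (∀ x : H, 0 ≤ (⟪x, ρ x⟫).re) ∧
    LinearMap.trace ℂ H ρ = 1

/-- The state-dependent error `ε_ρ(𝒜,𝒜')`. -/
def sdError (a a' : ι → H) (ρ : H →ₗ[ℂ] H) : ℝ :=
  ⨆ i : ι, ‖LinearMap.trace ℂ H (ρ ∘ₗ (ketbra (a i) - ketbra (a' i)))‖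

/-- The state-independent error `ε(𝒜,𝒜')`. -/
def siError (a a' : ι → H) : ℝ :=
  ⨆ ρ : {ρ : H →ₗ[ℂ] H // IsDensity ρ}, sdError a a' ρ.1

/-- The operator `|b_i⟩⟨b_i| − Σ_j |⟨a'_j, b_i⟩|² |a'_j⟩⟨a'_j|`. -/
def distOp (a' : ι' → H) (b : ι → H) (i : ι) : H →ₗ[ℂ] H :=
  ketbra (b i) - ∑ j : ι', (‖⟪a' j, b i⟫‖ ^ 2 : ℂ) • ketbra (a' j)

/-- The state-dependent disturbance `η_ρ(𝒜',ℬ)`. -/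
def sdDist (a' : ι' → H) (b : ι → H) (ρ : H →ₗ[ℂ] H) : ℝ :=
  ⨆ i : ι, ‖LinearMap.trace ℂ H (ρ ∘ₗ distOp a' b i)‖

/-- The state-independent disturbance `η(𝒜',ℬ)`. -/
def siDist (a' : ι' → H) (b : ι → H) : ℝ :=
  ⨆ ρ : {ρ : H →ₗ[ℂ] H // IsDensity ρ}, sdDist a' b ρ.1

/-- The state-independent overall error `Δ(𝒜,𝒜',ℬ)`. -/
def siOverall (a a' b : ι → H) : ℝ :=
  ⨆ ρ : {ρ : H →ₗ[ℂ] H // IsDensity ρ}, (sdError a a' ρ.1 + sdDist a' b ρ.1)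

section InnerProduct

open scoped InnerProductSpace
open RCLike

variable {𝕜 E : Type*} [RCLike 𝕜] [NormedAddCommGroup E] [InnerProductSpace 𝕜 E]

-- `(x, y) ↦ ⟪x, T y⟫` is a semi-inner product, so Cauchy–Schwarz applies to it.
theorem LinearMap.IsPositive.norm_inner_map_le {T : E →ₗ[𝕜] E} (hT : T.IsPositive) (x y : E) :
    ‖⟪x, T y⟫_𝕜‖ ≤ √(re ⟪x, T x⟫_𝕜) * √(re ⟪y, T y⟫_𝕜) := by
  let c : PreInnerProductSpace.Core 𝕜 E :=
    { inner u w := ⟪u, T w⟫_𝕜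
      conj_inner_symm u w := by rw [inner_conj_symm, hT.isSymmetric]
      re_inner_nonneg := hT.re_inner_nonneg_right
      add_left u w z := inner_add_left u w (T z)
      smul_left u w r := inner_smul_left u (T w) r }
  have hcs : ‖⟪x, T y⟫_𝕜‖ * ‖⟪y, T x⟫_𝕜‖ ≤ re ⟪x, T x⟫_𝕜 * re ⟪y, T y⟫_𝕜 :=
    @InnerProductSpace.Core.inner_mul_inner_self_le 𝕜 E _ _ _ c x y
  rw [← hT.isSymmetric y x, ← inner_conj_symm (T y) x, norm_conj, ← sq] at hcs
  rw [← Real.sqrt_mul (hT.re_inner_nonneg_right x)]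
  exact Real.le_sqrt_of_sq_le hcs

open ComplexConjugate in
theorem OrthonormalBasis.inner_map_self_eq_sum_sum {κ : Type*} [Fintype κ]
    (e : OrthonormalBasis κ 𝕜 E) (T : E →ₗ[𝕜] E) (v : E) :
    ⟪v, T v⟫_𝕜 = ∑ j, ∑ k, conj ⟪e j, v⟫_𝕜 * ⟪e k, v⟫_𝕜 * ⟪e j, T (e k)⟫_𝕜 := by
  conv_lhs => rw [← e.sum_repr' v]
  simp only [map_sum, map_smul, sum_inner, inner_sum, inner_smul_left, inner_smul_right,
    Finset.mul_sum]
  exact Finset.sum_comm.trans (by simp only [mul_left_comm, mul_assoc])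

end InnerProduct

theorem one_sub_one_div_natCast_nonneg (n : ℕ) : 0 ≤ 1 - 1 / (n : ℝ) := by
  simpa using Nat.cast_inv_le_one (α := ℝ) n

open Finset in
theorem norm_sum_sum_erase_le {κ F : Type*} [Fintype κ] [DecidableEq κ]
    [SeminormedAddCommGroup F]
    (M : κ → κ → F) (w : κ → ℝ) (hM : ∀ j k, ‖M j k‖ ≤ w j * w k) :
    ‖∑ j, ∑ k ∈ univ.erase j, M j k‖ ≤ (1 - 1 / Fintype.card κ) * (∑ j, w j) ^ 2 := by
  have hoff : ∑ j, ∑ k ∈ univ.erase j, w j * w k = (∑ j, w j) ^ 2 - ∑ j, w j ^ 2 := by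
    simp only [← mul_sum, sum_erase_eq_sub (mem_univ _), sum_sub_distrib, sq, sum_mul]
  have hcard : (∑ j, w j) ^ 2 / Fintype.card κ ≤ ∑ j, w j ^ 2 :=
    div_le_of_le_mul₀ (Nat.cast_nonneg _) (sum_nonneg fun j _ => sq_nonneg (w j))
      (by simpa [mul_comm] using sq_sum_le_card_mul_sum_sq (s := univ) (f := w))
  calc ‖∑ j, ∑ k ∈ univ.erase j, M j k‖
      ≤ ∑ j, ∑ k ∈ univ.erase j, w j * w k :=
        (norm_sum_le _ _).trans <| sum_le_sum fun j _ =>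
          (norm_sum_le _ _).trans <| sum_le_sum fun k _ => hM j k
    _ = (∑ j, w j) ^ 2 - ∑ j, w j ^ 2 := hoff
    _ ≤ (1 - 1 / Fintype.card κ) * (∑ j, w j) ^ 2 := by
        rw [one_sub_mul, one_div_mul_eq_div]
        linarith

section Disturbance

open Finset ComplexConjugate

variable {E κ κ' : Type*} [NormedAddCommGroup E] [InnerProductSpace ℂ E] [Fintype κ']

theorem IsDensity.isPositive {ρ : E →ₗ[ℂ] E} (hρ : IsDensity ρ) : ρ.IsPositive :=
  ⟨hρ.1, fun x => hρ.1 x x ▸ hρ.2.1 x⟩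

theorem IsDensity.sum_re_inner_map_self {ρ : E →ₗ[ℂ] E} (hρ : IsDensity ρ)
    (e : OrthonormalBasis κ' ℂ E) : ∑ j, (⟪e j, ρ (e j)⟫).re = 1 := by
  rw [← Complex.re_sum, ← LinearMap.trace_eq_sum_inner, hρ.2.2, Complex.one_re]

theorem trace_comp_ketbra [FiniteDimensional ℂ E] (ρ : E →ₗ[ℂ] E) (v : E) :
    LinearMap.trace ℂ E (ρ ∘ₗ ketbra v) = ⟪v, ρ v⟫ := by
  have : ρ ∘ₗ ketbra v = (InnerProductSpace.rankOne ℂ (ρ v) v).toLinearMap := by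
    ext x
    simp [ketbra]
  rw [this, InnerProductSpace.trace_rankOne]

theorem trace_comp_distOp [FiniteDimensional ℂ E] [DecidableEq κ'] (ρ : E →ₗ[ℂ] E)
    (a' : OrthonormalBasis κ' ℂ E) (b : κ → E) (i : κ) :
    LinearMap.trace ℂ E (ρ ∘ₗ distOp a' b i) =
      ∑ j, ∑ k ∈ univ.erase j, conj ⟪a' j, b i⟫ * ⟪a' k, b i⟫ * ⟪a' j, ρ (a' k)⟫ := by
  have hcomp : ρ ∘ₗ distOp a' b i = ρ ∘ₗ ketbra (b i) -
      ∑ j, (‖⟪a' j, b i⟫‖ ^ 2 : ℂ) • (ρ ∘ₗ ketbra (a' j)) := by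
    simp only [distOp, ← Module.End.mul_eq_comp, mul_sub, mul_sum, mul_smul_comm]
  simp only [hcomp, map_sub, map_sum, map_smul, smul_eq_mul, trace_comp_ketbra,
    a'.inner_map_self_eq_sum_sum ρ (b i), sum_erase_eq_sub (mem_univ _), sum_sub_distrib,
    Complex.conj_mul']

theorem norm_trace_comp_distOp_le [FiniteDimensional ℂ E] {ρ : E →ₗ[ℂ] E} (hρ : IsDensity ρ)
    (a' : OrthonormalBasis κ' ℂ E) (b : κ → E) (i : κ) (hb : ‖b i‖ ≤ 1) :
    ‖LinearMap.trace ℂ E (ρ ∘ₗ distOp a' b i)‖ ≤ 1 - 1 / Fintype.card κ' := by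
  classical
  set q : κ' → ℝ := fun j => (⟪a' j, ρ (a' j)⟫).re
  set w : κ' → ℝ := fun j => ‖⟪a' j, b i⟫‖ * √(q j)
  have hw : (∑ j, w j) ^ 2 ≤ 1 := by
    calc (∑ j, w j) ^ 2 ≤ (∑ j, ‖⟪a' j, b i⟫‖ ^ 2) * ∑ j, √(q j) ^ 2 :=
          sum_mul_sq_le_sq_mul_sq _ _ _
      _ = ‖b i‖ ^ 2 := by
          simp only [a'.sum_sq_norm_inner_right, Real.sq_sqrt (hρ.2.1 _),
            q, hρ.sum_re_inner_map_self, mul_one]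
      _ ≤ 1 := pow_le_one₀ (norm_nonneg _) hb
  rw [trace_comp_distOp]
  refine (norm_sum_sum_erase_le _ w fun j k => ?_).trans ?_
  · rw [norm_mul, norm_mul, RCLike.norm_conj]
    calc _ ≤ ‖⟪a' j, b i⟫‖ * ‖⟪a' k, b i⟫‖ * (√(q j) * √(q k)) := by
          gcongr
          exact hρ.isPositive.norm_inner_map_le (a' j) (a' k)
      _ = w j * w k := by ring
  · exact mul_le_of_le_one_right (one_sub_one_div_natCast_nonneg _) hw

theorem siDist_le [FiniteDimensional ℂ E] (a' : OrthonormalBasis κ' ℂ E) (b : κ → E)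
    (hb : ∀ i, ‖b i‖ ≤ 1) : siDist a' b ≤ 1 - 1 / Fintype.card κ' := by
  have hcard := one_sub_one_div_natCast_nonneg (Fintype.card κ')
  exact Real.iSup_le (fun ρ => Real.iSup_le
    (fun i => norm_trace_comp_distOp_le ρ.2 a' b i (hb i)) hcard) hcard

end Disturbance

theorem state_independent_disturbance_le_general {d : ℕ}
    (a' b : OrthonormalBasis (Fin d) ℂ H) :
    siDist (⇑a') (⇑b) ≤ 1 - 1 / (d : ℝ) := by
  simpa using siDist_le a' b fun i => (b.norm_eq_one i).le

/-- `η(𝒜',ℬ) ≤ 1 - 1/d`. -/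
theorem state_independent_disturbance_le {d : ℕ} (hd : 2 ≤ d)
    (a' b : OrthonormalBasis (Fin d) ℂ H) :
    siDist (⇑a') (⇑b) ≤ 1 - 1 / (d : ℝ) :=
  state_independent_disturbance_le_general a' b
end
end

section
/- For each index i, the Hermitian operator M_i = |b_i⟩⟨b_i| − Σ_k |⟨b_i, a'_k⟩|² |a'_k⟩⟨a'_k| satisfies sup over unit vectors ψ of |⟨ψ, M_i ψ⟩| = sup over unit vectors ψ of ⟨ψ, M_i ψ⟩ (that is, the spectral radius of M_i is attained by a nonnegative eigenvalue). Consequently η(𝒜',ℬ) = max_i sup over unit vectors ψ of (|⟨ψ, b_i⟩|² − Σ_k |⟨ψ, a'_k⟩|² |⟨b_i, a'_k⟩|²). -/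
open scoped ComplexInnerProductSpace

noncomputable section

variable {H : Type*} [NormedAddCommGroup H] [InnerProductSpace ℂ H] [FiniteDimensional ℂ H]
variable {ι ι' : Type*} [Fintype ι] [Fintype ι']

/-!
Each `Mᵢ = distOp a' b i` is self-adjoint with trace `1 - ∑ₖ |⟨a'ₖ, bᵢ⟩|² = 0`, and its quadratic
form is `≤ 0` on the hyperplane `bᵢ^⊥`. Two orthonormal eigenvectors with positive eigenvalues
would span a plane on which the form is positive definite, and that plane meets `bᵢ^⊥`; so at most
one eigenvalue is positive, and since the eigenvalues sum to zero, the largest eigenvalue `μᵢ`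
dominates the absolute value of every eigenvalue. Hence `|tr(ρ Mᵢ)| ≤ μᵢ` for every density operator
`ρ`, with equality at the pure state of a top eigenvector, which gives both suprema.
-/

lemma abs_le_of_sum_eq_zero_of_nonpos {κ : Type*} [Fintype κ] {f : κ → ℝ} (hsum : ∑ j, f j = 0)
    {j₀ : κ} (hneg : ∀ j ≠ j₀, f j ≤ 0) (j : κ) : |f j| ≤ f j₀ := by
  classical
  have hrest : f j₀ = ∑ k ∈ Finset.univ.erase j₀, -f k := by
    rw [Finset.sum_neg_distrib, eq_neg_iff_add_eq_zero,
      Finset.add_sum_erase _ _ (Finset.mem_univ j₀), hsum]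
  have hnonneg : ∀ k ∈ Finset.univ.erase j₀, 0 ≤ -f k :=
    fun k hk => neg_nonneg.2 (hneg k (Finset.ne_of_mem_erase hk))
  by_cases hj : j = j₀
  · rw [hj, abs_of_nonneg (hrest ▸ Finset.sum_nonneg hnonneg)]
  · rw [abs_of_nonpos (hneg j hj), hrest]
    exact Finset.single_le_sum hnonneg (Finset.mem_erase.2 ⟨hj, Finset.mem_univ j⟩)

lemma ciSup_eq_of_forall_le_of_eq {α : Sort*} {f : α → ℝ} {μ : ℝ} (hle : ∀ a, f a ≤ μ) (a₀ : α)
    (ha₀ : f a₀ = μ) : ⨆ a, f a = μ :=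
  have : Nonempty α := ⟨a₀⟩
  le_antisymm (ciSup_le hle) (ha₀ ▸ le_ciSup ⟨μ, Set.forall_mem_range.2 hle⟩ a₀)

lemma ciSup_ciSup_eq_of_forall_le_of_exists_eq {α : Sort*} {β : Type*} [Finite β] [Nonempty β]
    {f : α → β → ℝ} {μ : β → ℝ} (hle : ∀ a b, f a b ≤ μ b) (hex : ∀ b, ∃ a, f a b = μ b) :
    ⨆ a, ⨆ b, f a b = ⨆ b, μ b := by
  obtain ⟨a₀, -⟩ := hex (Classical.arbitrary β)
  have : Nonempty α := ⟨a₀⟩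
  have hsup_le : ∀ a, ⨆ b, f a b ≤ ⨆ b, μ b :=
    fun a => ciSup_mono (Set.finite_range μ).bddAbove (hle a)
  refine le_antisymm (ciSup_le hsup_le) (ciSup_le fun b => ?_)
  obtain ⟨a, ha⟩ := hex b
  calc μ b = f a b := ha.symm
    _ ≤ ⨆ b, f a b := le_ciSup (Set.finite_range _).bddAbove b
    _ ≤ ⨆ a, ⨆ b, f a b := le_ciSup ⟨_, Set.forall_mem_range.2 hsup_le⟩ a

section

variable {E : Type*} [NormedAddCommGroup E] [InnerProductSpace ℂ E] {κ κ' : Type*} [Fintype κ']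

lemma ketbra_apply (v x : E) : ketbra v x = ⟪v, x⟫ • v := rfl

lemma ketbra_isSymmetric (v : E) : (ketbra v).IsSymmetric :=
  InnerProductSpace.isSymmetric_rankOne_self v

lemma inner_mul_inner_eq_norm_sq (x v : E) : ⟪x, v⟫ * ⟪v, x⟫ = (‖⟪x, v⟫‖ : ℂ) ^ 2 := by
  rw [← inner_conj_symm v x, RCLike.mul_conj]
  rfl

lemma distOp_isSymmetric (a' : κ' → E) (b : κ → E) (i : κ) : (distOp a' b i).IsSymmetric :=
  (ketbra_isSymmetric _).sub <| LinearMap.isSymmetric_sum _ fun k _ =>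
    (ketbra_isSymmetric _).smul (by simp [← Complex.ofReal_pow])

lemma inner_distOp_self (a' : κ' → E) (b : κ → E) (i : κ) (x : E) :
    ⟪x, distOp a' b i x⟫ =
      ((‖⟪x, b i⟫‖ ^ 2 - ∑ k, ‖⟪x, a' k⟫‖ ^ 2 * ‖⟪b i, a' k⟫‖ ^ 2 : ℝ) : ℂ) := by
  simp only [distOp, LinearMap.sub_apply, LinearMap.sum_apply, LinearMap.smul_apply, ketbra_apply,
    inner_sub_right, inner_sum, inner_smul_right]
  push_cast
  congr 1
  · rw [mul_comm, inner_mul_inner_eq_norm_sq]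
  · refine Finset.sum_congr rfl fun k _ => ?_
    rw [mul_comm ⟪a' k, x⟫, inner_mul_inner_eq_norm_sq, norm_inner_symm (a' k), mul_comm]

lemma re_inner_distOp_self_nonpos (a' : κ' → E) (b : κ → E) (i : κ) {x : E}
    (hx : ⟪b i, x⟫ = 0) : (⟪x, distOp a' b i x⟫).re ≤ 0 := by
  rw [inner_distOp_self, Complex.ofReal_re, norm_inner_symm, hx, norm_zero]
  have := Finset.sum_nonneg fun k (_ : k ∈ Finset.univ) =>
    mul_nonneg (sq_nonneg ‖⟪x, a' k⟫‖) (sq_nonneg ‖⟪b i, a' k⟫‖)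
  linarith

lemma exists_inner_eq_zero_re_inner_pos {T : E →ₗ[ℂ] E} {x y : E} (hx : ‖x‖ = 1) (hy : ‖y‖ = 1)
    (hxy : ⟪x, y⟫ = 0) {s t : ℝ} (hs : 0 < s) (ht : 0 < t) (hTx : T x = (s : ℂ) • x)
    (hTy : T y = (t : ℂ) • y) (v : E) : ∃ ψ, ⟪v, ψ⟫ = 0 ∧ 0 < (⟪ψ, T ψ⟫).re := by
  have hyx : ⟪y, x⟫ = 0 := by rw [← inner_conj_symm, hxy, map_zero]
  have hform : ∀ c c' : ℂ,
      (⟪c • x + c' • y, T (c • x + c' • y)⟫).re = ‖c‖ ^ 2 * s + ‖c'‖ ^ 2 * t := by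
    intro c c'
    simp [hTx, hTy, hxy, hyx, inner_self_eq_norm_sq_to_K, hx, hy, Complex.sq_norm,
      Complex.normSq_apply]
    ring
  by_cases hvx : ⟪v, x⟫ = 0
  · exact ⟨(1 : ℂ) • x + (0 : ℂ) • y, by simp [hvx], by rw [hform]; simpa using hs⟩
  · refine ⟨⟪v, y⟫ • x + (-⟪v, x⟫) • y, by simp [inner_smul_right]; ring, ?_⟩
    rw [hform, norm_neg]
    have := norm_pos_iff.2 hvx
    positivity

variable [FiniteDimensional ℂ E]

lemma trace_ketbra_comp (v : E) (T : E →ₗ[ℂ] E) :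
    LinearMap.trace ℂ E (ketbra v ∘ₗ T) = ⟪v, T v⟫ := by
  let e := stdOrthonormalBasis ℂ E
  calc LinearMap.trace ℂ E (ketbra v ∘ₗ T) = ⟪v, T (∑ i, ⟪e i, v⟫ • e i)⟫ := by
        simp [LinearMap.trace_eq_sum_inner _ e, ketbra_apply, inner_smul_right, mul_comm]
    _ = ⟪v, T v⟫ := by rw [e.sum_repr']

lemma trace_ketbra (v : E) : LinearMap.trace ℂ E (ketbra v) = (‖v‖ ^ 2 : ℂ) := by
  simpa [inner_self_eq_norm_sq_to_K] using trace_ketbra_comp v LinearMap.id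

lemma isDensity_ketbra {v : E} (hv : ‖v‖ = 1) : IsDensity (ketbra v) := by
  refine ⟨ketbra_isSymmetric v, fun x => ?_, by simp [trace_ketbra, hv]⟩
  rw [ketbra_apply, inner_smul_right, inner_mul_inner_eq_norm_sq]
  norm_cast
  positivity

lemma trace_distOp (a' : OrthonormalBasis κ' ℂ E) (b : κ → E) {i : κ} (hb : ‖b i‖ = 1) :
    LinearMap.trace ℂ E (distOp (⇑a') b i) = 0 := by
  have hsum : ∑ k, ‖⟪a' k, b i⟫‖ ^ 2 = 1 := by rw [a'.sum_sq_norm_inner_right, hb, one_pow]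
  simp only [distOp, map_sub, map_sum, map_smul, trace_ketbra, a'.orthonormal.1, hb, smul_eq_mul,
    Complex.ofReal_one, one_pow, mul_one, sub_eq_zero]
  exact_mod_cast hsum.symm

variable {T : E →ₗ[ℂ] E} {n : ℕ}

lemma LinearMap.IsSymmetric.eigenvalues_nonpos_of_ne (hT : T.IsSymmetric)
    (hn : Module.finrank ℂ E = n) (v : E) (hv : ∀ x, ⟪v, x⟫ = 0 → (⟪x, T x⟫).re ≤ 0)
    {j j' : Fin n} (hjj' : j ≠ j') (hj : 0 < hT.eigenvalues hn j) :
    hT.eigenvalues hn j' ≤ 0 := by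
  by_contra! hj'
  set e := hT.eigenvectorBasis hn
  obtain ⟨ψ, hvψ, hpos⟩ := exists_inner_eq_zero_re_inner_pos (e.orthonormal.1 j)
    (e.orthonormal.1 j') (e.orthonormal.2 hjj') hj hj' (hT.apply_eigenvectorBasis hn j)
    (hT.apply_eigenvectorBasis hn j') v
  exact (hv ψ hvψ).not_gt hpos

lemma LinearMap.IsSymmetric.abs_eigenvalues_le_max (hT : T.IsSymmetric)
    (hn : Module.finrank ℂ E = n) (htr : LinearMap.trace ℂ E T = 0) (v : E)
    (hv : ∀ x, ⟪v, x⟫ = 0 → (⟪x, T x⟫).re ≤ 0) {j₀ : Fin n}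
    (hj₀ : ∀ j, hT.eigenvalues hn j ≤ hT.eigenvalues hn j₀) (j : Fin n) :
    |hT.eigenvalues hn j| ≤ hT.eigenvalues hn j₀ := by
  refine abs_le_of_sum_eq_zero_of_nonpos ?_ (fun j hj => le_of_not_gt fun hpos => ?_) j
  · rw [← hT.re_trace_eq_sum_eigenvalues hn, htr, map_zero]
  · exact (hT.eigenvalues_nonpos_of_ne hn v hv (Ne.symm hj) (hpos.trans_le (hj₀ j))).not_gt hpos

lemma LinearMap.IsSymmetric.norm_trace_comp_le (hT : T.IsSymmetric) (hn : Module.finrank ℂ E = n)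
    {μ : ℝ} (hμ : ∀ j, |hT.eigenvalues hn j| ≤ μ) {ρ : E →ₗ[ℂ] E} (hρ : IsDensity ρ) :
    ‖LinearMap.trace ℂ E (ρ ∘ₗ T)‖ ≤ μ := by
  obtain ⟨hρsym, hρpos, hρtr⟩ := hρ
  set e := hT.eigenvectorBasis hn
  set w : Fin n → ℝ := fun j => (⟪e j, ρ (e j)⟫).re
  have hw : ∀ j, ⟪e j, ρ (e j)⟫ = w j := fun j =>
    (Complex.conj_eq_iff_re.1 (by rw [inner_conj_symm, hρsym])).symm
  have hwsum : ∑ j, w j = 1 := by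
    have := LinearMap.trace_eq_sum_inner ρ e
    simp only [hρtr, hw] at this
    exact_mod_cast this.symm
  have htr : LinearMap.trace ℂ E (ρ ∘ₗ T) = ((∑ j, hT.eigenvalues hn j * w j : ℝ) : ℂ) := by
    rw [LinearMap.trace_eq_sum_inner _ e]
    push_cast
    refine Finset.sum_congr rfl fun j _ => ?_
    rw [Function.comp_apply, hT.apply_eigenvectorBasis, map_smul, inner_smul_right, hw]
    rfl
  rw [htr, Complex.norm_real, Real.norm_eq_abs]
  calc |∑ j, hT.eigenvalues hn j * w j| ≤ ∑ j, |hT.eigenvalues hn j * w j| :=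
        Finset.abs_sum_le_sum_abs _ _
    _ ≤ ∑ j, μ * w j := Finset.sum_le_sum fun j _ => by
        rw [abs_mul, abs_of_nonneg (hρpos (e j))]
        exact mul_le_mul_of_nonneg_right (hμ j) (hρpos (e j))
    _ = μ := by rw [← Finset.mul_sum, hwsum, mul_one]

lemma LinearMap.IsSymmetric.exists_inner_self_eq_forall_norm_trace_comp_le [Nontrivial E]
    (hT : T.IsSymmetric) (htr : LinearMap.trace ℂ E T = 0) (v : E)
    (hv : ∀ x, ⟪v, x⟫ = 0 → (⟪x, T x⟫).re ≤ 0) :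
    ∃ μ : ℝ, 0 ≤ μ ∧ ∃ ψ : E, ‖ψ‖ = 1 ∧ ⟪ψ, T ψ⟫ = μ ∧
      ∀ ρ, IsDensity ρ → ‖LinearMap.trace ℂ E (ρ ∘ₗ T)‖ ≤ μ := by
  have : Nonempty (Fin (Module.finrank ℂ E)) := ⟨⟨0, Module.finrank_pos⟩⟩
  obtain ⟨j₀, hj₀⟩ := Finite.exists_max (hT.eigenvalues rfl)
  have habs := hT.abs_eigenvalues_le_max rfl htr v hv hj₀
  set e := hT.eigenvectorBasis rfl
  refine ⟨_, (abs_nonneg _).trans (habs j₀), e j₀, e.orthonormal.1 j₀, ?_,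
    fun ρ hρ => hT.norm_trace_comp_le rfl habs hρ⟩
  simp [e, hT.apply_eigenvectorBasis, inner_self_eq_norm_sq_to_K,
    (hT.eigenvectorBasis rfl).orthonormal.1 j₀]

end

/-- the spectral radius of each `M_i` is attained by a nonnegative eigenvalue,
and consequently `η(𝒜',ℬ)` is a maximum over pure states without absolute value. -/
theorem disturbance_perron_frobenius {d : ℕ} (hd : 2 ≤ d)
    (a' b : OrthonormalBasis (Fin d) ℂ H) :
    (∀ i : Fin d,
      (⨆ ψ : {ψ : H // ‖ψ‖ = 1}, ‖⟪(ψ : H), distOp (⇑a') (⇑b) i (ψ : H)⟫‖)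
        = ⨆ ψ : {ψ : H // ‖ψ‖ = 1}, (⟪(ψ : H), distOp (⇑a') (⇑b) i (ψ : H)⟫).re) ∧
    (siDist (⇑a') (⇑b) = ⨆ i : Fin d, ⨆ ψ : {ψ : H // ‖ψ‖ = 1},
      (‖⟪(ψ : H), b i⟫‖ ^ 2 - ∑ k : Fin d, ‖⟪(ψ : H), a' k⟫‖ ^ 2 * ‖⟪b i, a' k⟫‖ ^ 2)) := by
  have : Nonempty (Fin d) := ⟨⟨0, by omega⟩⟩
  have : Nontrivial H := nontrivial_of_ne _ _ (b.orthonormal.ne_zero ⟨0, by omega⟩)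
  choose μ hμ ψ hψ hψμ hρμ using fun i =>
    (distOp_isSymmetric a' b i).exists_inner_self_eq_forall_norm_trace_comp_le
      (trace_distOp a' b (b.orthonormal.1 i)) (b i) fun _ => re_inner_distOp_self_nonpos a' b i
  have hpure : ∀ i (φ : {φ : H // ‖φ‖ = 1}), ‖⟪(φ : H), distOp a' b i φ⟫‖ ≤ μ i := fun i φ => by
    simpa [trace_ketbra_comp] using hρμ i _ (isDensity_ketbra φ.2)
  have hnorm : ∀ i, ‖⟪ψ i, distOp a' b i (ψ i)⟫‖ = μ i := fun i => by
    rw [hψμ, Complex.norm_real, Real.norm_of_nonneg (hμ i)]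
  have hre : ∀ i, ⨆ φ : {φ : H // ‖φ‖ = 1}, (⟪(φ : H), distOp a' b i φ⟫).re = μ i := fun i =>
    ciSup_eq_of_forall_le_of_eq (fun φ => (Complex.re_le_norm _).trans (hpure i φ))
      ⟨ψ i, hψ i⟩ (by simp [hψμ])
  refine ⟨fun i => ?_, ?_⟩
  · rw [hre i]
    exact ciSup_eq_of_forall_le_of_eq (hpure i) ⟨ψ i, hψ i⟩ (hnorm i)
  · have hform : ∀ i (φ : H), ‖⟪φ, b i⟫‖ ^ 2 - ∑ k, ‖⟪φ, a' k⟫‖ ^ 2 * ‖⟪b i, a' k⟫‖ ^ 2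
        = (⟪φ, distOp a' b i φ⟫).re := fun i φ => by rw [inner_distOp_self, Complex.ofReal_re]
    simp_rw [hform, hre]
    exact ciSup_ciSup_eq_of_forall_le_of_exists_eq (fun ρ i => hρμ i ρ.1 ρ.2) fun i =>
      ⟨⟨ketbra (ψ i), isDensity_ketbra (hψ i)⟩, by simpa [trace_ketbra_comp] using hnorm i⟩
end
end
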